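/- Define Â(y) := ∫_{ℝᵈ} (1 − cos⟨z, y⟩) a(z) dz for y ∈ ℝᵈ. If M₂(a) < ∞, then there exists a constant C > 0, depending only on a, such that Â(ξ + 2πn) ≥ C|ξ|² for every ξ ∈ [−π,π)ᵈ and every n ∈ ℤᵈ. -/

import Mathlib

/-!
For small `y`, restrict to a ball of radius `R` on which `a` is not a.e. zero. Once `‖y‖ ≤ π / R`
we have `|⟪z, y⟫| ≤ π` on that ball, hence `1 - cos ⟪z, y⟫ ≥ (2 / π²) ⟪z, y⟫²`, and the truncated
second-moment form `u ↦ ∫_{‖z‖ ≤ R} ⟪z, u⟫² a z` is positive definite because hyperplanes are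
null; so `Â(y) ≥ c ‖y‖²`. For large `y`, `Â(y) → ∫ a > 0` by the Riemann–Lebesgue lemma, and `Â`
is continuous and positive away from `0`, so `Â ≥ m > 0` on `‖y‖ ≥ δ`. Finally, when
`ξ ∈ [-π, π)ᵈ` and `‖ξ + 2πn‖ < π` we must have `n = 0`; otherwise `Â(ξ + 2πn) ≥ m`, which
dominates a multiple of `‖ξ‖² ≤ d π²`.
-/

open MeasureTheory Complex
open scoped Real InnerProductSpace ENNReal

noncomputable section

/-- `ℝᵈ` as a Euclidean space. -/
abbrev Ed (d : ℕ) : Type := EuclideanSpace ℝ (Fin d)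

/-- Inclusion of a coordinate function into `ℝᵈ`. -/
def toEd {d : ℕ} (f : Fin d → ℝ) : Ed d := WithLp.toLp 2 f

open Filter Topology Metric
open scoped FourierTransform

lemma norm_one_sub_cos_le_two (t : ℝ) : ‖1 - Real.cos t‖ ≤ 2 := by
  rw [Real.norm_eq_abs, abs_le]
  constructor <;> linarith [Real.cos_le_one t, Real.neg_one_le_cos t]

lemma integral_mul_pos_of_ae_pos {α : Type*} [MeasurableSpace α] {ν : Measure α} {g a : α → ℝ}
    (hg : ∀ᵐ z ∂ν, 0 < g z) (ha0 : 0 ≤ᵐ[ν] a) (ha_ne : ¬ a =ᵐ[ν] 0)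
    (hint : Integrable (fun z => g z * a z) ν) : 0 < ∫ z, g z * a z ∂ν := by
  have hnonneg : 0 ≤ᵐ[ν] fun z => g z * a z := by
    filter_upwards [hg, ha0] with z hgz haz using mul_nonneg hgz.le haz
  rw [integral_pos_iff_support_of_nonneg_ae hnonneg hint, pos_iff_ne_zero,
    Ne, Measure.measure_support_eq_zero_iff ν]
  refine fun hga => ha_ne ?_
  filter_upwards [hga, hg] with z hgaz hgz
  exact (mul_eq_zero.1 hgaz).resolve_left hgz.ne'

lemma exists_pos_not_ae_eq_zero_restrict_closedBall {X β : Type*} [PseudoMetricSpace X]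
    [MeasurableSpace X] [Zero β] {μ : Measure X} {f : X → β} (hf : ¬ f =ᵐ[μ] 0) (x : X) :
    ∃ R > 0, ¬ f =ᵐ[μ.restrict (closedBall x R)] 0 := by
  by_contra! h
  refine hf ?_
  have hball : ∀ n : ℕ, f =ᵐ[μ.restrict (closedBall x n)] 0 := fun n =>
    ae_restrict_of_ae_restrict_of_subset (closedBall_subset_closedBall (by linarith))
      (h (n + 1) (by positivity))
  rw [← Measure.restrict_univ (μ := μ), ← iUnion_closedBall_nat x]
  exact (ae_restrict_iUnion_iff _ _).2 hball

section CosineSymbol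

variable {E : Type*} [NormedAddCommGroup E] [InnerProductSpace ℝ E]

lemma norm_inner_sq_le_of_mem_closedBall {R : ℝ} {z : E} (hz : z ∈ closedBall 0 R) (u : E) :
    ‖⟪z, u⟫_ℝ ^ 2‖ ≤ (R * ‖u‖) ^ 2 := by
  rw [norm_pow, Real.norm_eq_abs]
  refine pow_le_pow_left₀ (abs_nonneg _) ((abs_real_inner_le_norm z u).trans ?_) 2
  exact mul_le_mul_of_nonneg_right (mem_closedBall_zero_iff.1 hz) (norm_nonneg u)

variable [MeasurableSpace E]

/-- `Â`, with Lebesgue measure replaced by an arbitrary measure `μ`. -/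
def cosineSymbol (μ : Measure E) (a : E → ℝ) (y : E) : ℝ :=
  ∫ z, (1 - Real.cos ⟪z, y⟫_ℝ) * a z ∂μ

variable [BorelSpace E] {μ : Measure E} {a : E → ℝ}

lemma integrable_one_sub_cos_inner_mul (ha : Integrable a μ) (y : E) :
    Integrable (fun z => (1 - Real.cos ⟪z, y⟫_ℝ) * a z) μ :=
  ha.bdd_mul (by fun_prop : Continuous fun z : E => 1 - Real.cos ⟪z, y⟫_ℝ).aestronglyMeasurable
    (ae_of_all _ fun _ => norm_one_sub_cos_le_two _)

lemma continuous_cosineSymbol (ha : Integrable a μ) : Continuous (cosineSymbol μ a) :=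
  continuous_of_dominated (bound := fun z => 2 * ‖a z‖)
    (fun y => (integrable_one_sub_cos_inner_mul ha y).aestronglyMeasurable)
    (fun y => ae_of_all _ fun z => by
      rw [norm_mul]; exact mul_le_mul_of_nonneg_right (norm_one_sub_cos_le_two _) (norm_nonneg _))
    (ha.norm.const_mul 2) (ae_of_all _ fun z => by fun_prop)

lemma integrableOn_inner_sq_mul_closedBall (ha : Integrable a μ) (R : ℝ) (u : E) :
    IntegrableOn (fun z => ⟪z, u⟫_ℝ ^ 2 * a z) (closedBall 0 R) μ :=
  ha.integrableOn.bdd_mul (by fun_prop : Continuous fun z : E => ⟪z, u⟫_ℝ ^ 2).aestronglyMeasurable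
    (ae_restrict_of_forall_mem measurableSet_closedBall fun _ hz =>
      norm_inner_sq_le_of_mem_closedBall hz u)

variable [FiniteDimensional ℝ E] [μ.IsAddHaarMeasure]

lemma ae_inner_notMem_of_countable {y : E} (hy : y ≠ 0) {s : Set ℝ} (hs : s.Countable) :
    ∀ᵐ z ∂μ, ⟪z, y⟫_ℝ ∉ s := by
  set L : E →ₗ[ℝ] ℝ := (innerSL ℝ y).toLinearMap
  have hL : Function.Surjective L := LinearMap.surjective_of_ne_zero fun h => hy <| by
    simpa [L] using LinearMap.congr_fun h y
  have := (ae_comp_linearMap_mem_iff L μ volume hL hs.measurableSet.compl).2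
    (measure_eq_zero_iff_ae_notMem.1 (hs.measure_zero volume))
  simpa [L, real_inner_comm] using this

lemma ae_one_sub_cos_inner_pos {y : E} (hy : y ≠ 0) : ∀ᵐ z ∂μ, 0 < 1 - Real.cos ⟪z, y⟫_ℝ := by
  filter_upwards [ae_inner_notMem_of_countable (μ := μ) hy
    (Set.countable_range fun k : ℤ => k * (2 * π))] with z hz
  exact sub_pos.2 <| (Real.cos_le_one _).lt_of_ne fun h => hz ((Real.cos_eq_one_iff _).1 h)

lemma cosineSymbol_pos (ha : Integrable a μ) (ha0 : 0 ≤ᵐ[μ] a) (ha_ne : ¬ a =ᵐ[μ] 0) {y : E}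
    (hy : y ≠ 0) : 0 < cosineSymbol μ a y :=
  integral_mul_pos_of_ae_pos (ae_one_sub_cos_inner_pos hy) ha0 ha_ne
    (integrable_one_sub_cos_inner_mul ha y)

lemma exists_pos_mul_sq_norm_le_setIntegral_inner_sq_mul (ha : Integrable a μ) (ha0 : 0 ≤ᵐ[μ] a)
    {R : ℝ} (haR : ¬ a =ᵐ[μ.restrict (closedBall 0 R)] 0) :
    ∃ q > 0, ∀ u : E, q * ‖u‖ ^ 2 ≤ ∫ z in closedBall 0 R, ⟪z, u⟫_ℝ ^ 2 * a z ∂μ := by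
  set Q : E → ℝ := fun u => ∫ z in closedBall 0 R, ⟪z, u⟫_ℝ ^ 2 * a z ∂μ
  have hQ_cont : ContinuousOn Q (sphere 0 1) :=
    continuousOn_of_dominated (bound := fun z => (R * 1) ^ 2 * ‖a z‖)
      (fun u _ => (integrableOn_inner_sq_mul_closedBall ha R u).aestronglyMeasurable)
      (fun u hu => ae_restrict_of_forall_mem measurableSet_closedBall fun z hz => by
        rw [norm_mul, ← mem_sphere_zero_iff_norm.1 hu]
        exact mul_le_mul_of_nonneg_right (norm_inner_sq_le_of_mem_closedBall hz u) (norm_nonneg _))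
      (ha.integrableOn.norm.const_mul _)
      (ae_of_all _ fun z => (by fun_prop : Continuous fun u => ⟪z, u⟫_ℝ ^ 2 * a z).continuousOn)
  have hQ_pos : ∀ u ∈ sphere (0 : E) 1, 0 < Q u := fun u hu =>
    integral_mul_pos_of_ae_pos (g := fun z => ⟪z, u⟫_ℝ ^ 2)
      (ae_restrict_of_ae <| by
        filter_upwards [ae_inner_notMem_of_countable (μ := μ) (ne_zero_of_mem_unit_sphere ⟨u, hu⟩)
          (Set.countable_singleton 0)] with z hz using sq_pos_of_ne_zero hz)
      (ae_restrict_of_ae ha0) haR (integrableOn_inner_sq_mul_closedBall ha R u)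
  obtain ⟨q, hq, hqQ⟩ := (isCompact_sphere (0 : E) 1).exists_forall_le' hQ_cont hQ_pos
  refine ⟨q, hq, fun u => ?_⟩
  rcases eq_or_ne u 0 with rfl | hu
  · simp
  have hQ_smul : ∀ t : ℝ, Q (t • u) = t ^ 2 * Q u := fun t => by
    simp only [Q, inner_smul_right, mul_pow, mul_assoc]
    exact integral_const_mul _ _
  have := hqQ (‖u‖⁻¹ • u) (by simp [norm_smul, hu])
  rwa [hQ_smul, inv_pow, ← div_eq_inv_mul, le_div_iff₀ (by positivity)] at this

lemma exists_pos_mul_sq_norm_le_cosineSymbol (ha : Integrable a μ) (ha0 : 0 ≤ᵐ[μ] a)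
    (ha_ne : ¬ a =ᵐ[μ] 0) :
    ∃ δ > 0, ∃ c > 0, ∀ y : E, ‖y‖ ≤ δ → c * ‖y‖ ^ 2 ≤ cosineSymbol μ a y := by
  obtain ⟨R, hR, haR⟩ := exists_pos_not_ae_eq_zero_restrict_closedBall ha_ne 0
  obtain ⟨q, hq, hQ⟩ := exists_pos_mul_sq_norm_le_setIntegral_inner_sq_mul ha ha0 haR
  refine ⟨π / R, by positivity, 2 / π ^ 2 * q, by positivity, fun y hy => ?_⟩
  have hpt : ∀ᵐ z ∂μ.restrict (closedBall 0 R),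
      2 / π ^ 2 * (⟪z, y⟫_ℝ ^ 2 * a z) ≤ (1 - Real.cos ⟪z, y⟫_ℝ) * a z := by
    filter_upwards [ae_restrict_mem measurableSet_closedBall, ae_restrict_of_ae ha0] with z hz hz0
    have hzy : |⟪z, y⟫_ℝ| ≤ π := calc
      |⟪z, y⟫_ℝ| ≤ ‖z‖ * ‖y‖ := abs_real_inner_le_norm z y
      _ ≤ R * (π / R) := by gcongr; simpa using hz
      _ = π := mul_div_cancel₀ _ hR.ne'
    rw [← mul_assoc]
    exact mul_le_mul_of_nonneg_right (by linarith [Real.cos_le_one_sub_mul_cos_sq hzy]) hz0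
  calc 2 / π ^ 2 * q * ‖y‖ ^ 2
      ≤ 2 / π ^ 2 * ∫ z in closedBall 0 R, ⟪z, y⟫_ℝ ^ 2 * a z ∂μ := by
        rw [mul_assoc]; gcongr; exact hQ y
    _ = ∫ z in closedBall 0 R, 2 / π ^ 2 * (⟪z, y⟫_ℝ ^ 2 * a z) ∂μ := (integral_const_mul _ _).symm
    _ ≤ ∫ z in closedBall 0 R, (1 - Real.cos ⟪z, y⟫_ℝ) * a z ∂μ :=
        integral_mono_ae ((integrableOn_inner_sq_mul_closedBall ha R y).const_mul _)
          (integrable_one_sub_cos_inner_mul ha y).integrableOn hpt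
    _ ≤ cosineSymbol μ a y := setIntegral_le_integral (integrable_one_sub_cos_inner_mul ha y) <| by
        filter_upwards [ha0] with z hz using mul_nonneg (sub_nonneg.2 (Real.cos_le_one _)) hz

lemma tendsto_integral_cos_inner_mul_cocompact (ha : Integrable a μ) :
    Tendsto (fun y => ∫ z, Real.cos ⟪z, y⟫_ℝ * a z ∂μ) (cocompact E) (𝓝 0) := by
  -- Mathlib's Riemann–Lebesgue lemma is about `𝐞 (-w v) = exp (-2πi w v)` on the dual space:
  -- precompose with `y ↦ ⟪-(2π)⁻¹ • y, ·⟫` and take real parts.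
  set c : ℝ := -(2 * π)⁻¹
  set L : E ≃ₜ StrongDual ℝ E := (Homeomorph.smulOfNeZero c (by simp [c, Real.pi_ne_zero])).trans
    (InnerProductSpace.toDual ℝ E).toHomeomorph
  have hL : ∀ y z, L y z = ⟪z, c • y⟫_ℝ := fun y z => real_inner_comm _ _
  have hRL := (Complex.continuous_re.tendsto 0).comp
    ((tendsto_integral_exp_smul_cocompact (fun z => (a z : ℂ)) μ).comp L.map_cocompact.le)
  rw [Complex.zero_re] at hRL
  refine hRL.congr fun y => ?_
  have hint : Integrable (fun z => 𝐞 (-L y z) • (a z : ℂ)) μ := by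
    simpa only [hL] using (Real.fourierIntegral_convergent_iff (c • y)).2 ha.ofReal
  rw [Function.comp_apply, Function.comp_apply, ← Complex.reCLM_apply,
    ← Complex.reCLM.integral_comp_comm hint]
  congr 1 with z
  rw [hL, Complex.reCLM_apply, Circle.smul_def, Real.fourierChar_apply, real_inner_smul_right]
  have h2π : 2 * π * -(c * ⟪z, y⟫_ℝ) = ⟪z, y⟫_ℝ := by
    simp only [c]; field_simp
  rw [h2π, smul_eq_mul, Complex.re_mul_ofReal, Complex.exp_ofReal_mul_I_re]

lemma tendsto_cosineSymbol_cocompact (ha : Integrable a μ) :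
    Tendsto (cosineSymbol μ a) (cocompact E) (𝓝 (∫ z, a z ∂μ)) := by
  have hcos : ∀ y, Integrable (fun z => Real.cos ⟪z, y⟫_ℝ * a z) μ := fun y =>
    ha.bdd_mul (c := 1)
      (by fun_prop : Continuous fun z : E => Real.cos ⟪z, y⟫_ℝ).aestronglyMeasurable
      (ae_of_all _ fun _ => Real.abs_cos_le_one _)
  have hsplit : cosineSymbol μ a = fun y => ∫ z, a z ∂μ - ∫ z, Real.cos ⟪z, y⟫_ℝ * a z ∂μ := by
    ext y
    rw [← integral_sub ha (hcos y)]
    simp only [cosineSymbol, sub_mul, one_mul]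
  rw [hsplit]
  simpa using tendsto_const_nhds.sub (tendsto_integral_cos_inner_mul_cocompact ha)

lemma exists_pos_le_cosineSymbol_of_le_norm (ha : Integrable a μ) (ha0 : 0 ≤ᵐ[μ] a)
    (ha_ne : ¬ a =ᵐ[μ] 0) {δ : ℝ} (hδ : 0 < δ) :
    ∃ m > 0, ∀ y : E, δ ≤ ‖y‖ → m ≤ cosineSymbol μ a y := by
  have hI : 0 < ∫ z, a z ∂μ := by
    rw [integral_pos_iff_support_of_nonneg_ae ha0 ha, pos_iff_ne_zero, Ne,
      Measure.measure_support_eq_zero_iff μ]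
    exact ha_ne
  obtain ⟨K, hK, hKA⟩ : ∃ K, IsCompact K ∧ ∀ y ∉ K, (∫ z, a z ∂μ) / 2 < cosineSymbol μ a y :=
    hasBasis_cocompact.eventually_iff.1
      ((tendsto_cosineSymbol_cocompact ha).eventually (lt_mem_nhds (half_lt_self hI)))
  have hK' : IsCompact (K ∩ {y | δ ≤ ‖y‖}) :=
    hK.inter_right (isClosed_le continuous_const continuous_norm)
  obtain ⟨m, hm, hmA⟩ := hK'.exists_forall_le' (continuous_cosineSymbol ha).continuousOn
    (fun y hy => cosineSymbol_pos ha ha0 ha_ne (norm_pos_iff.1 (hδ.trans_le hy.2)))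
  refine ⟨min ((∫ z, a z ∂μ) / 2) m, lt_min (half_pos hI) hm, fun y hy => ?_⟩
  by_cases hyK : y ∈ K
  · exact (min_le_right _ _).trans (hmA y ⟨hyK, hy⟩)
  · exact (min_le_left _ _).trans (hKA y hyK).le

end CosineSymbol

lemma eq_zero_of_abs_add_two_pi_mul_lt {x : ℝ} (hx : x ∈ Set.Ico (-π) π) {n : ℤ}
    (h : |x + 2 * π * n| < π) : n = 0 := by
  obtain ⟨h₁, h₂⟩ := abs_lt.1 h
  have hlt : (n : ℝ) < 1 := by nlinarith [hx.1, Real.pi_pos]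
  have hgt : (-1 : ℝ) < n := by nlinarith [hx.2, Real.pi_pos]
  have hlt' : n < 1 := by exact_mod_cast hlt
  have hgt' : -1 < n := by exact_mod_cast hgt
  omega

lemma eq_zero_of_norm_add_toEd_two_pi_mul_lt {d : ℕ} {ξ : Ed d} (hξ : ∀ i, ξ i ∈ Set.Ico (-π) π)
    {n : Fin d → ℤ} (h : ‖ξ + toEd fun i => 2 * π * (n i : ℝ)‖ < π) : n = 0 :=
  funext fun i => eq_zero_of_abs_add_two_pi_mul_lt (hξ i) ((PiLp.norm_apply_le _ i).trans_lt h)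

lemma norm_sq_le_of_forall_mem_Ico {d : ℕ} {ξ : Ed d} (hξ : ∀ i, ξ i ∈ Set.Ico (-π) π) :
    ‖ξ‖ ^ 2 ≤ d * π ^ 2 := by
  rw [EuclideanSpace.norm_sq_eq]
  calc ∑ i, ‖ξ i‖ ^ 2 ≤ ∑ _i : Fin d, π ^ 2 := Finset.sum_le_sum fun i _ => by
        rw [Real.norm_eq_abs, sq_abs]; exact sq_le_sq' (hξ i).1 (hξ i).2.le
    _ = d * π ^ 2 := by simp

theorem statement5_general
    (d : ℕ)
    (a : Ed d → ℝ)
    (ha_int : Integrable a (volume : Measure (Ed d)))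
    (ha_nonneg : ∀ᵐ x ∂(volume : Measure (Ed d)), 0 ≤ a x)
    (ha_ne : ¬ (a =ᵐ[(volume : Measure (Ed d))] 0)) :
    ∃ C : ℝ, 0 < C ∧
      ∀ ξ : Ed d, (∀ i, ξ i ∈ Set.Ico (-π) π) → ∀ n : Fin d → ℤ,
        C * ‖ξ‖ ^ 2 ≤
          ∫ z, (1 - Real.cos ⟪z, ξ + toEd fun i => 2 * π * (n i : ℝ)⟫_ℝ) * a z := by
  obtain ⟨δ, hδ, c, hc, hnear⟩ := exists_pos_mul_sq_norm_le_cosineSymbol ha_int ha_nonneg ha_ne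
  obtain ⟨m, hm, hfar⟩ :=
    exists_pos_le_cosineSymbol_of_le_norm ha_int ha_nonneg ha_ne (lt_min hδ Real.pi_pos)
  refine ⟨min c (m / ((d + 1) * π ^ 2)), by positivity, fun ξ hξ n => ?_⟩
  change _ ≤ cosineSymbol volume a _
  by_cases hy : ‖ξ + toEd fun i => 2 * π * (n i : ℝ)‖ < min δ π
  · obtain rfl := eq_zero_of_norm_add_toEd_two_pi_mul_lt hξ (hy.trans_le (min_le_right _ _))
    have hξ0 : (ξ + toEd fun i => 2 * π * ((0 : Fin d → ℤ) i : ℝ)) = ξ := by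
      simp [toEd, ← Pi.zero_def]
    rw [hξ0] at hy ⊢
    calc min c _ * ‖ξ‖ ^ 2 ≤ c * ‖ξ‖ ^ 2 := by gcongr; exact min_le_left _ _
      _ ≤ _ := hnear ξ (hy.le.trans (min_le_left _ _))
  · calc min c (m / ((d + 1) * π ^ 2)) * ‖ξ‖ ^ 2
        ≤ m / ((d + 1) * π ^ 2) * ((d + 1) * π ^ 2) := by
          gcongr
          · exact min_le_right _ _
          · nlinarith [norm_sq_le_of_forall_mem_Ico hξ, sq_nonneg π]
      _ = m := div_mul_cancel₀ _ (by positivity)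
      _ ≤ _ := hfar _ (not_lt.1 hy)

/-- if `M₂(a) < ∞` then there is `C > 0` (depending only on `a`) with
`Â(ξ + 2πn) ≥ C|ξ|²` for every `ξ ∈ [−π,π)ᵈ` and every `n ∈ ℤᵈ`. -/
theorem statement5
    (d : ℕ) (hd : 1 ≤ d)
    (a : Ed d → ℝ)
    (ha_int : Integrable a (volume : Measure (Ed d)))
    (ha_nonneg : ∀ᵐ x ∂(volume : Measure (Ed d)), 0 ≤ a x)
    (ha_ne : ¬ (a =ᵐ[(volume : Measure (Ed d))] 0))
    (hM2 : Integrable (fun x => ‖x‖ ^ 2 * a x) (volume : Measure (Ed d))) :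
    ∃ C : ℝ, 0 < C ∧
      ∀ ξ : Ed d, (∀ i, ξ i ∈ Set.Ico (-π) π) → ∀ n : Fin d → ℤ,
        C * ‖ξ‖ ^ 2 ≤
          ∫ z, (1 - Real.cos ⟪z, ξ + toEd fun i => 2 * π * (n i : ℝ)⟫_ℝ) * a z :=
  statement5_general d a ha_int ha_nonneg ha_ne
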